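/- (Eigenvalue ratios of the quantum transfer matrix lie strictly inside the unit disc.) Let 0 < q < 1, set γ = −log q, and let z be a complex number with |Im z| < γ/2. Then | Σ_{n∈ℤ} (−1)ⁿ q^{2(n+1/2)²} e^{i(2n+1)z} | < | Σ_{n∈ℤ} (−1)ⁿ q^{2n²} e^{2inz} |; that is, |θ₁(z, q²)| < |θ₄(z, q²)|. In particular each factor θ₁(y − iγ/2, q²)/θ₄(y − iγ/2, q²), for a particle parameter y with 0 < Im y < γ, has modulus strictly less than 1. -/

import Mathlib

/-! Put `τ = iγ/π` (Mathlib's normalisation `q = e^{iπτ}`). The two series are `-i θ₂(w | 2τ)` and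
`θ₃(w | 2τ)` at `w = z/π + 1/2`. The classical identity
`θ₃(u|τ) θ₃(v|τ) = θ₃(u+v|2τ) θ₃(u-v|2τ) + θ₂(u+v|2τ) θ₂(u-v|2τ)`, taken at `u + v = w`,
`u - v = 1 - w̄`, reads `θ₄(iy|τ) θ₃(x - 1/2|τ) = |θ₃(w|2τ)|² - |θ₂(w|2τ)|²` with `x, y` real, so it
suffices that the left side is positive. For `θ₃` at a real point this follows from the modular
transformation, which makes every term of the series positive. For `θ₄(iy|τ)`,
`|y| < Im τ / 2`, the same identity gives `θ₃(iy|τ) θ₄(iy|τ) = θ₄(2iy|2τ) θ₄(0|2τ)`: this doubles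
the margin `Im τ - 2|y|` until the constant term dominates the series. -/

open Complex Real
open scoped ComplexOrder ComplexConjugate

theorem HasSum.mul_of_summable_norm {ι κ R : Type*} [NormedRing R] [CompleteSpace R]
    {f : ι → R} {g : κ → R} {a b : R} (hf : HasSum f a) (hg : HasSum g b)
    (hf' : Summable (‖f ·‖)) (hg' : Summable (‖g ·‖)) :
    HasSum (fun p : ι × κ ↦ f p.1 * g p.2) (a * b) :=
  hf.mul hg (summable_mul_of_summable_norm hf' hg')

theorem HasSum.int_prod_even_add_odd {M : Type*} [AddCommMonoid M] [TopologicalSpace M]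
    [ContinuousAdd M] {f : ℤ × ℤ → M} {a b : M}
    (he : HasSum (fun p : ℤ × ℤ ↦ f (p.1 + p.2, p.1 - p.2)) a)
    (ho : HasSum (fun p : ℤ × ℤ ↦ f (p.1 + p.2 + 1, p.1 - p.2)) b) : HasSum f (a + b) := by
  have he_inj : Function.Injective fun p : ℤ × ℤ ↦ (p.1 + p.2, p.1 - p.2) := fun p p' h ↦ by
    simp only [Prod.mk.injEq] at h; ext <;> omega
  have ho_inj : Function.Injective fun p : ℤ × ℤ ↦ (p.1 + p.2 + 1, p.1 - p.2) := fun p p' h ↦ by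
    simp only [Prod.mk.injEq] at h; ext <;> omega
  refine (he_inj.hasSum_range_iff.2 he).add_isCompl ?_ (ho_inj.hasSum_range_iff.2 ho)
  constructor
  · rw [Set.disjoint_left]
    rintro _ ⟨p, rfl⟩ ⟨p', h⟩
    simp only [Prod.mk.injEq] at h
    omega
  · rw [codisjoint_iff_le_sup]
    intro m _
    rcases Int.emod_two_eq_zero_or_one (m.1 + m.2) with h | h
    · exact Or.inl ⟨((m.1 + m.2) / 2, (m.1 - m.2) / 2), by ext <;> simp <;> omega⟩
    · exact Or.inr ⟨((m.1 + m.2 - 1) / 2, (m.1 - m.2 - 1) / 2), by ext <;> simp <;> omega⟩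

/-- The classical `θ₂(z | τ)`: the series of `jacobiTheta₂` (the classical `θ₃`) with the
summation index running over `ℤ + 1/2`. -/
noncomputable def jacobiTheta₂Half_term (n : ℤ) (z τ : ℂ) : ℂ :=
  cexp (2 * π * I * (n + 1 / 2) * z + π * I * (n + 1 / 2) ^ 2 * τ)

noncomputable def jacobiTheta₂Half (z τ : ℂ) : ℂ := ∑' n : ℤ, jacobiTheta₂Half_term n z τ

lemma jacobiTheta₂Half_term_eq_mul_jacobiTheta₂_term (n : ℤ) (z τ : ℂ) :
    jacobiTheta₂Half_term n z τ =
      cexp (π * I * z + π * I * τ / 4) * jacobiTheta₂_term n (z + τ / 2) τ := by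
  rw [jacobiTheta₂Half_term, jacobiTheta₂_term, ← Complex.exp_add]
  ring_nf

lemma summable_norm_jacobiTheta₂_term (z : ℂ) {τ : ℂ} (hτ : 0 < im τ) :
    Summable (‖jacobiTheta₂_term · z τ‖) :=
  summable_norm_iff.2 ((summable_jacobiTheta₂_term_iff z τ).2 hτ)

lemma summable_norm_jacobiTheta₂Half_term (z : ℂ) {τ : ℂ} (hτ : 0 < im τ) :
    Summable (‖jacobiTheta₂Half_term · z τ‖) := by
  simpa only [jacobiTheta₂Half_term_eq_mul_jacobiTheta₂_term, norm_mul] using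
    (summable_norm_jacobiTheta₂_term (z + τ / 2) hτ).mul_left _

lemma hasSum_jacobiTheta₂Half_term (z : ℂ) {τ : ℂ} (hτ : 0 < im τ) :
    HasSum (jacobiTheta₂Half_term · z τ) (jacobiTheta₂Half z τ) :=
  (summable_norm_jacobiTheta₂Half_term z hτ).of_norm.hasSum

lemma jacobiTheta₂Half_add_one (z τ : ℂ) :
    jacobiTheta₂Half (z + 1) τ = -jacobiTheta₂Half z τ := by
  rw [jacobiTheta₂Half, jacobiTheta₂Half, ← tsum_neg]
  refine tsum_congr fun n ↦ ?_
  have : cexp (2 * π * I * (n + 1 / 2)) = -1 := by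
    rw [mul_add, Complex.exp_add, mul_comm _ (n : ℂ), exp_int_mul_two_pi_mul_I,
      show 2 * π * I * (1 / 2) = π * I by ring, exp_pi_mul_I, one_mul]
  rw [jacobiTheta₂Half_term, jacobiTheta₂Half_term, mul_add, add_right_comm, Complex.exp_add,
    mul_one, this, mul_neg_one]

lemma jacobiTheta₂Half_neg (z τ : ℂ) : jacobiTheta₂Half (-z) τ = jacobiTheta₂Half z τ := by
  rw [jacobiTheta₂Half, ← (Equiv.subLeft (-1 : ℤ)).tsum_eq]
  refine tsum_congr fun n ↦ ?_
  simp only [jacobiTheta₂Half_term, Equiv.subLeft_apply]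
  push_cast
  ring_nf

lemma jacobiTheta₂Half_half (τ : ℂ) : jacobiTheta₂Half (1 / 2) τ = 0 := by
  have h := jacobiTheta₂Half_add_one (-(1 / 2)) τ
  rw [jacobiTheta₂Half_neg, show -(1 / 2 : ℂ) + 1 = 1 / 2 by norm_num] at h
  linear_combination h / 2

lemma conj_jacobiTheta₂Half (z τ : ℂ) :
    conj (jacobiTheta₂Half z τ) = jacobiTheta₂Half (-conj z) (-conj τ) := by
  rw [jacobiTheta₂Half, conj_tsum]
  refine tsum_congr fun n ↦ ?_
  simp only [jacobiTheta₂Half_term, ← exp_conj, map_add, map_mul, map_ofNat, conj_ofReal, conj_I,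
    map_intCast, map_div₀, map_one, map_pow]
  ring_nf

theorem jacobiTheta₂_mul_jacobiTheta₂ (u v : ℂ) {τ : ℂ} (hτ : 0 < im τ) :
    jacobiTheta₂ u τ * jacobiTheta₂ v τ =
      jacobiTheta₂ (u + v) (2 * τ) * jacobiTheta₂ (u - v) (2 * τ) +
      jacobiTheta₂Half (u + v) (2 * τ) * jacobiTheta₂Half (u - v) (2 * τ) := by
  have h2τ : 0 < im (2 * τ) := by simpa using hτ
  have heven := (hasSum_jacobiTheta₂_term (u + v) h2τ).mul_of_summable_norm
    (hasSum_jacobiTheta₂_term (u - v) h2τ) (summable_norm_jacobiTheta₂_term (u + v) h2τ)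
    (summable_norm_jacobiTheta₂_term (u - v) h2τ)
  have hodd := (hasSum_jacobiTheta₂Half_term (u + v) h2τ).mul_of_summable_norm
    (hasSum_jacobiTheta₂Half_term (u - v) h2τ) (summable_norm_jacobiTheta₂Half_term (u + v) h2τ)
    (summable_norm_jacobiTheta₂Half_term (u - v) h2τ)
  refine (hasSum_jacobiTheta₂_term u hτ).mul_eq (hasSum_jacobiTheta₂_term v hτ)
    (HasSum.int_prod_even_add_odd (heven.congr_fun fun p ↦ ?_) (hodd.congr_fun fun p ↦ ?_))
  · simp only [jacobiTheta₂_term, ← Complex.exp_add]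
    push_cast
    ring_nf
  · simp only [jacobiTheta₂_term, jacobiTheta₂Half_term, ← Complex.exp_add]
    push_cast
    ring_nf

lemma jacobiTheta₂_I_mul_pos (y : ℝ) {t : ℝ} (ht : 0 < t) :
    0 < jacobiTheta₂ (I * y) (I * t) := by
  have hterm (n : ℤ) : jacobiTheta₂_term n (I * y) (I * t) =
      (rexp (-(2 * π * n * y) - π * n ^ 2 * t) : ℝ) := by
    rw [jacobiTheta₂_term, ofReal_exp]
    push_cast
    ring_nf
    rw [I_sq]
    ring_nf
  have hsum : Summable (jacobiTheta₂_term · (I * y) (I * t)) :=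
    (summable_jacobiTheta₂_term_iff _ _).2 (by simpa using ht)
  refine hsum.tsum_pos (fun n ↦ ?_) 0 ?_ <;>
    simp only [hterm, zero_le_real, zero_lt_real, (exp_pos _).le, exp_pos]

lemma jacobiTheta₂_ofReal_pos (x : ℝ) {t : ℝ} (ht : 0 < t) :
    0 < jacobiTheta₂ x (I * t) := by
  have ht' : (t : ℂ) ≠ 0 := ofReal_ne_zero.2 ht.ne'
  rw [jacobiTheta₂_functional_equation]
  have h1 : 1 / (-I * (I * t)) ^ (1 / 2 : ℂ) = ((1 / t ^ (1 / 2 : ℝ) : ℝ) : ℂ) := by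
    rw [show -I * (I * t) = (t : ℂ) by ring_nf; rw [I_sq]; ring]
    push_cast [ofReal_cpow ht.le]
    rfl
  have h2 : cexp (-π * I * x ^ 2 / (I * t)) = (rexp (-π * x ^ 2 / t) : ℝ) := by
    rw [ofReal_exp]
    push_cast
    field_simp
  have h3 : (x : ℂ) / (I * t) = I * (-x / t : ℝ) := by
    push_cast
    field_simp
    ring_nf
    rw [I_sq]
    ring
  have h4 : -1 / (I * t) = I * (1 / t : ℝ) := by
    push_cast
    field_simp
    ring_nf
    rw [I_sq]
  rw [h1, h2, h3, h4]
  exact mul_pos (mul_pos (zero_lt_real.2 (by positivity)) (zero_lt_real.2 (exp_pos _)))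
    (jacobiTheta₂_I_mul_pos _ (by positivity))

lemma re_tsum_pos_of_norm_le_pow {f : ℤ → ℂ} (hf0 : f 0 = 1) {r : ℝ} (hr0 : 0 ≤ r)
    (hr : r < 1 / 3) (hfr : ∀ n ≠ 0, ‖f n‖ ≤ r ^ n.natAbs) : 0 < (∑' n, f n).re := by
  have hgeom : HasSum (fun n : ℕ ↦ r * r ^ n) (r * (1 - r)⁻¹) :=
    (hasSum_geometric_of_lt_one hr0 (by linarith)).mul_left r
  have hpos (n : ℕ) : ‖f (n + 1)‖ ≤ r * r ^ n :=
    (hfr _ (by omega)).trans_eq (by rw [← pow_succ']; congr 1)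
  have hneg (n : ℕ) : ‖f (-(n + 1))‖ ≤ r * r ^ n :=
    (hfr _ (by omega)).trans_eq (by rw [← pow_succ']; congr 1)
  have hsmall : r * (1 - r)⁻¹ < 1 / 2 := by
    rw [← div_eq_mul_inv, div_lt_iff₀ (by linarith)]
    linarith
  rw [tsum_of_add_one_of_neg_add_one (.of_norm_bounded hgeom.summable hpos)
    (.of_norm_bounded hgeom.summable hneg), hf0, add_re, add_re, one_re]
  linarith [neg_le_of_abs_le ((abs_re_le_norm _).trans (tsum_of_norm_bounded hgeom hpos)),
    neg_le_of_abs_le ((abs_re_le_norm _).trans (tsum_of_norm_bounded hgeom hneg))]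

lemma norm_jacobiTheta₂_term_le_pow {z τ : ℂ} (h : 1 ≤ im τ - 2 * |im z|) {n : ℤ} (hn : n ≠ 0) :
    ‖jacobiTheta₂_term n z τ‖ ≤ rexp (-π) ^ n.natAbs := by
  have hn1 : (1 : ℝ) ≤ |(n : ℝ)| := by exact_mod_cast Int.one_le_abs hn
  have hnz : -(|(n : ℝ)| * |im z|) ≤ n * im z := by
    rw [← abs_mul]; exact neg_abs_le _
  have key : |(n : ℝ)| ≤ |(n : ℝ)| ^ 2 * im τ + 2 * n * im z := by
    nlinarith [mul_nonneg (sq_nonneg |(n : ℝ)|) (by linarith : 0 ≤ im τ - 1 - 2 * |im z|),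
      mul_nonneg (mul_nonneg (sub_nonneg.2 hn1) (abs_nonneg (n : ℝ)))
        (by positivity : (0 : ℝ) ≤ 1 + 2 * |im z|)]
  rw [norm_jacobiTheta₂_term, ← Real.exp_nat_mul, exp_le_exp, Nat.cast_natAbs, Int.cast_abs,
    ← sq_abs (n : ℝ)]
  nlinarith [pi_pos]

lemma re_jacobiTheta₂_pos {z τ : ℂ} (h : 1 ≤ im τ - 2 * |im z|) :
    0 < (jacobiTheta₂ z τ).re := by
  have hπ : rexp (-π) < 1 / 3 := by
    rw [Real.exp_neg, inv_lt_comm₀ (exp_pos _) (by norm_num)]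
    linarith [add_one_le_exp π, pi_gt_three]
  exact re_tsum_pos_of_norm_le_pow (by simp [jacobiTheta₂_term]) (exp_pos _).le hπ
    fun _ hn ↦ norm_jacobiTheta₂_term_le_pow h hn

lemma im_jacobiTheta₂_I_mul_add_half (y t : ℝ) :
    (jacobiTheta₂ (I * y + 1 / 2) (I * t)).im = 0 := by
  rw [← conj_eq_iff_im, jacobiTheta₂_conj]
  have hτ : -conj (I * t) = I * t := by simp
  have hz : conj (I * y + 1 / 2) = -(I * y - 1 / 2) := by
    simp only [map_add, map_mul, conj_I, conj_ofReal, map_div₀, map_one, map_ofNat]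
    ring
  rw [hτ, hz, jacobiTheta₂_neg_left, ← jacobiTheta₂_add_left]
  ring_nf

lemma jacobiTheta₂_I_mul_add_half_pos_of_one_le (N : ℕ) {y t : ℝ}
    (h : 1 ≤ 2 ^ N * (t - 2 * |y|)) :
    0 < jacobiTheta₂ (I * y + 1 / 2) (I * t) := by
  induction N generalizing y t with
  | zero =>
    rw [pow_zero, one_mul] at h
    refine pos_iff.2 ⟨re_jacobiTheta₂_pos ?_, (im_jacobiTheta₂_I_mul_add_half y t).symm⟩
    simpa using h
  | succ N ih =>
    have ht : 0 < t := by
      have := abs_nonneg y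
      nlinarith [pow_pos (two_pos (α := ℝ)) (N + 1)]
    have hid := jacobiTheta₂_mul_jacobiTheta₂ (I * y + 1 / 2) (I * y) (τ := I * t)
      (by simpa using ht)
    rw [add_sub_cancel_left, jacobiTheta₂Half_half, mul_zero, add_zero,
      show I * y + 1 / 2 + I * y = I * ((2 * y : ℝ) : ℂ) + 1 / 2 by push_cast; ring,
      show 2 * (I * t) = I * ((2 * t : ℝ) : ℂ) by push_cast; ring] at hid
    have h2 : 1 ≤ 2 ^ N * (2 * t - 2 * |2 * y|) := by
      rw [abs_mul, abs_two]; rw [pow_succ] at h; linarith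
    have hhalf : 0 < jacobiTheta₂ (1 / 2) (I * ((2 * t : ℝ) : ℂ)) := by
      simpa only [ofReal_div, ofReal_one, ofReal_ofNat] using
        jacobiTheta₂_ofReal_pos (1 / 2) (by positivity : 0 < 2 * t)
    exact (pos_iff_pos_of_mul_pos (hid ▸ mul_pos (ih h2) hhalf)).2 (jacobiTheta₂_I_mul_pos y ht)

lemma jacobiTheta₂_I_mul_add_half_pos {y t : ℝ} (h : 2 * |y| < t) :
    0 < jacobiTheta₂ (I * y + 1 / 2) (I * t) := by
  obtain ⟨N, hN⟩ := pow_unbounded_of_one_lt (t - 2 * |y|)⁻¹ one_lt_two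
  refine jacobiTheta₂_I_mul_add_half_pos_of_one_le N ?_
  rw [inv_lt_iff_one_lt_mul₀ (by linarith)] at hN
  exact hN.le

theorem norm_jacobiTheta₂Half_lt_norm_jacobiTheta₂ {z : ℂ} {t : ℝ} (hz : 4 * |z.im| < t) :
    ‖jacobiTheta₂Half z (I * t)‖ < ‖jacobiTheta₂ z (I * t)‖ := by
  have ht : 0 < t / 2 := by linarith [abs_nonneg z.im]
  have hid := jacobiTheta₂_mul_jacobiTheta₂ (I * z.im + 1 / 2) ((z.re - 1 / 2 : ℝ) : ℂ)
    (τ := I * (t / 2 : ℝ)) (by simpa using ht)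
  have hτ : 2 * (I * ((t / 2 : ℝ) : ℂ)) = I * t := by push_cast; ring
  have hsum : I * z.im + 1 / 2 + ((z.re - 1 / 2 : ℝ) : ℂ) = z := by
    push_cast; linear_combination re_add_im z
  have hdiff : I * z.im + 1 / 2 - ((z.re - 1 / 2 : ℝ) : ℂ) = -conj z + 1 := by
    apply Complex.ext <;> simp; ring
  have hconj : -conj (I * (t : ℂ)) = I * t := by simp
  rw [hτ, hsum, hdiff, jacobiTheta₂_add_left, jacobiTheta₂Half_add_one, jacobiTheta₂_neg_left,
    ← hconj, ← jacobiTheta₂_conj, ← conj_jacobiTheta₂Half, hconj, mul_neg, mul_conj', mul_conj',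
    ← sub_eq_add_neg] at hid
  have hpos : 0 < jacobiTheta₂ (I * z.im + 1 / 2) (I * (t / 2 : ℝ)) *
      jacobiTheta₂ ((z.re - 1 / 2 : ℝ) : ℂ) (I * (t / 2 : ℝ)) :=
    mul_pos (jacobiTheta₂_I_mul_add_half_pos (by linarith)) (jacobiTheta₂_ofReal_pos _ ht)
  rw [hid, ← ofReal_pow, ← ofReal_pow, ← ofReal_sub, zero_lt_real, sub_pos] at hpos
  exact lt_of_pow_lt_pow_left₀ 2 (norm_nonneg _) hpos

lemma theta4_series_eq_jacobiTheta₂ {q : ℝ} (hq : 0 < q) (z : ℂ) :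
    ∑' n : ℤ, (-1 : ℂ) ^ n * ((q ^ (2 * (n : ℝ) ^ 2) : ℝ) : ℂ) * cexp (2 * I * n * z) =
      jacobiTheta₂ (z / π + 1 / 2) (I * (-2 * Real.log q / π : ℝ)) := by
  refine tsum_congr fun n ↦ ?_
  rw [jacobiTheta₂_term, ← exp_pi_mul_I, ← exp_int_mul, rpow_def_of_pos hq, ofReal_exp,
    ← Complex.exp_add, ← Complex.exp_add]
  congr 1
  have : (π : ℂ) ≠ 0 := ofReal_ne_zero.2 pi_ne_zero
  push_cast
  field_simp
  ring_nf
  rw [I_sq]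
  ring

lemma theta1_series_eq_jacobiTheta₂Half {q : ℝ} (hq : 0 < q) (z : ℂ) :
    ∑' n : ℤ, (-1 : ℂ) ^ n * ((q ^ (2 * ((n : ℝ) + 1 / 2) ^ 2) : ℝ) : ℂ) *
        cexp (I * (2 * n + 1) * z) =
      -I * jacobiTheta₂Half (z / π + 1 / 2) (I * (-2 * Real.log q / π : ℝ)) := by
  rw [jacobiTheta₂Half, ← tsum_mul_left]
  refine tsum_congr fun n ↦ ?_
  have hI : -I = cexp (-(π / 2 * I)) := by
    rw [Complex.exp_neg, exp_pi_div_two_mul_I, inv_I]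
  rw [jacobiTheta₂Half_term, hI, ← exp_pi_mul_I, ← exp_int_mul, rpow_def_of_pos hq, ofReal_exp,
    ← Complex.exp_add, ← Complex.exp_add, ← Complex.exp_add]
  congr 1
  have : (π : ℂ) ≠ 0 := ofReal_ne_zero.2 pi_ne_zero
  push_cast
  field_simp
  ring_nf
  rw [I_sq]
  ring

lemma norm_theta1_series_lt_norm_theta4_series {q : ℝ} (hq : 0 < q) {z : ℂ}
    (hz : |z.im| < -Real.log q / 2) :
    ‖∑' n : ℤ, (-1 : ℂ) ^ n * ((q ^ (2 * ((n : ℝ) + 1 / 2) ^ 2) : ℝ) : ℂ) *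
        cexp (I * (2 * n + 1) * z)‖ <
      ‖∑' n : ℤ, (-1 : ℂ) ^ n * ((q ^ (2 * (n : ℝ) ^ 2) : ℝ) : ℂ) * cexp (2 * I * n * z)‖ := by
  rw [theta1_series_eq_jacobiTheta₂Half hq, theta4_series_eq_jacobiTheta₂ hq, norm_mul, norm_neg,
    norm_I, one_mul]
  refine norm_jacobiTheta₂Half_lt_norm_jacobiTheta₂ ?_
  have him : (z / π + 1 / 2).im = z.im / π := by simp [div_ofReal_im]
  rw [him, abs_div, abs_of_pos pi_pos, mul_div_assoc', div_lt_div_iff_of_pos_right pi_pos]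
  linarith

theorem theta1_lt_theta4 (q γ : ℝ) (hq0 : 0 < q) (hγ : γ = -Real.log q) :
    (∀ z : ℂ, |z.im| < γ / 2 →
      ‖∑' n : ℤ, (-1 : ℂ) ^ n * ((q ^ (2 * ((n : ℝ) + 1 / 2) ^ 2) : ℝ) : ℂ) *
          Complex.exp (Complex.I * (2 * (n : ℂ) + 1) * z)‖ <
      ‖∑' n : ℤ, (-1 : ℂ) ^ n * ((q ^ (2 * (n : ℝ) ^ 2) : ℝ) : ℂ) *
          Complex.exp (2 * Complex.I * (n : ℂ) * z)‖) ∧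
    (∀ y : ℂ, 0 < y.im → y.im < γ →
      ‖(∑' n : ℤ, (-1 : ℂ) ^ n * ((q ^ (2 * ((n : ℝ) + 1 / 2) ^ 2) : ℝ) : ℂ) *
          Complex.exp (Complex.I * (2 * (n : ℂ) + 1) * (y - Complex.I * (γ : ℂ) / 2))) /
        (∑' n : ℤ, (-1 : ℂ) ^ n * ((q ^ (2 * (n : ℝ) ^ 2) : ℝ) : ℂ) *
          Complex.exp (2 * Complex.I * (n : ℂ) * (y - Complex.I * (γ : ℂ) / 2)))‖ < 1) := by
  subst hγ
  refine ⟨fun z hz ↦ norm_theta1_series_lt_norm_theta4_series hq0 hz, fun y hy0 hyγ ↦ ?_⟩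
  have hz : |(y - I * ↑(-Real.log q) / 2).im| < -Real.log q / 2 := by
    rw [abs_lt]
    constructor <;> simp <;> linarith
  have h := norm_theta1_series_lt_norm_theta4_series hq0 hz
  rw [norm_div, div_lt_one ((norm_nonneg _).trans_lt h)]
  exact h
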